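/- Let α ∈ (0,1), β ∈ ℝ, c_α = (1−α/2)(1−α), and let K(x,y) = c_α·∫₀ˣ∫₀ʸ e^{β(x−u)} e^{β(y−v)} |u−v|^{−α} dv du for x,y ∈ [0,1]. Suppose λ > 0 and φ : [0,1] → ℝ is continuously differentiable with ∫₀¹ K(x,y)φ(y) dy = λ·φ(x) for all x ∈ [0,1]. Define ψ(x) = e^{−βx}·∫ₓ¹ e^{βr} φ(r) dr. Then ψ is twice continuously differentiable on [0,1], ψ'(x) + β·ψ(x) = −φ(x), and ψ solves the generalized spectral problem: ∫₀¹ c_α·|x−y|^{−α}·ψ(y) dy = λ·(β²·ψ(x) − ψ''(x)) for all x ∈ [0,1], with boundary conditions ψ(1) = 0 and ψ'(0) + β·ψ(0) = 0. -/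

import Mathlib

/-!
Write `K(x,y) = c_α ∫₀ˣ e^{β(x−u)} h(u,y) du` with `h(u,y) = ∫₀ʸ e^{β(y−v)} |u−v|^{−α} dv`.
Then `∂ₓK = βK + c_α h`, so differentiating the eigen-equation gives
`λ(φ' − βφ) = c_α ∫₀¹ h(x,y) φ(y) dy`, and exchanging the order of integration over the triangle
`v ≤ y` turns the right-hand side into `c_α ∫₀¹ |x−v|^{−α} ψ(v) dv`. Since `ψ' = −βψ − φ`, one has
`β²ψ − ψ'' = φ' − βφ`, which is the generalized spectral equation. Finally `K(0,·) = 0` forces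
`φ(0) = 0`, which is the boundary condition `ψ'(0) + βψ(0) = 0`.
-/

open Real Set intervalIntegral

/-- The fOU covariance kernel for `H = 1 − α/2 > 1/2`,
`K(x,y) = c_α ∫₀ˣ∫₀ʸ e^{β(x−u)} e^{β(y−v)} |u−v|^{−α} dv du`, `c_α = (1−α/2)(1−α)`. -/
noncomputable def fOUkernelHigh (α β : ℝ) (x y : ℝ) : ℝ :=
  (1 - α / 2) * (1 - α) *
    ∫ u in (0:ℝ)..x, ∫ v in (0:ℝ)..y,
      Real.exp (β * (x - u)) * Real.exp (β * (y - v)) * |u - v| ^ (-α)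

open MeasureTheory Metric Interval

theorem intervalIntegrable_abs_rpow {r : ℝ} (hr : -1 < r) (a b : ℝ) :
    IntervalIntegrable (fun w => |w| ^ r) volume a b := by
  have nonneg : ∀ c, 0 ≤ c → IntervalIntegrable (fun w => |w| ^ r) volume 0 c := fun c hc => by
    rw [intervalIntegrable_iff, uIoc_of_le hc]
    refine ((intervalIntegrable_iff_integrableOn_Ioc_of_le hc).1
      (intervalIntegrable_rpow' hr)).congr_fun (fun w hw => ?_) measurableSet_Ioc
    rw [abs_of_pos hw.1]
  have all : ∀ c, IntervalIntegrable (fun w => |w| ^ r) volume 0 c := fun c => by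
    rcases le_total 0 c with hc | hc
    · exact nonneg c hc
    · rw [IntervalIntegrable.iff_comp_neg]
      simpa using nonneg (-c) (neg_nonneg.2 hc)
  exact (all a).symm.trans (all b)

theorem continuous_integral_comp_sub_left {k : ℝ → ℝ}
    (hk : ∀ a b, IntervalIntegrable k volume a b) (a : ℝ) :
    Continuous fun p : ℝ × ℝ => ∫ v in a..p.2, k (p.1 - v) := by
  have hprim : Continuous fun t => ∫ w in a..t, k w := continuous_primitive hk a
  have key : ∀ p : ℝ × ℝ, ∫ v in a..p.2, k (p.1 - v) =
      (∫ w in a..p.1 - a, k w) - ∫ w in a..p.1 - p.2, k w := fun p => by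
    rw [integral_comp_sub_left, integral_interval_sub_left (hk _ _) (hk _ _)]
  simp_rw [key]
  fun_prop

theorem hasDerivAt_integral_exp_mul_sub {f : ℝ → ℝ} (hf : Continuous f) (β a x : ℝ) :
    HasDerivAt (fun x => ∫ u in a..x, exp (β * (x - u)) * f u)
      (β * (∫ u in a..x, exp (β * (x - u)) * f u) + f x) x := by
  have split : ∀ x, ∫ u in a..x, exp (β * (x - u)) * f u =
      exp (β * x) * ∫ u in a..x, exp (-(β * u)) * f u := fun x => by
    rw [← intervalIntegral.integral_const_mul]
    congr 1 with u
    rw [← mul_assoc, ← exp_add]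
    ring_nf
  have hg : Continuous fun u => exp (-(β * u)) * f u := by fun_prop
  have hprim := integral_hasDerivAt_right (hg.intervalIntegrable a x)
    (hg.stronglyMeasurableAtFilter _ _) hg.continuousAt
  have hexp : HasDerivAt (fun x => exp (β * x)) (exp (β * x) * β) x :=
    ((hasDerivAt_id x).const_mul β).exp.congr_deriv (by simp)
  simp_rw [split]
  refine (hexp.mul hprim).congr_deriv ?_
  have : exp (β * x) * exp (-(β * x)) = 1 := by rw [← exp_add]; simp
  linear_combination f x * this

theorem hasDerivAt_intervalIntegral_of_continuousOn {E : Type*} [NormedAddCommGroup E]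
    [NormedSpace ℝ E] {F F' : ℝ → ℝ → E} {a b : ℝ}
    (hF : ∀ x, ContinuousOn (F x) [[a, b]])
    (hF' : ContinuousOn (Function.uncurry F') (univ ×ˢ [[a, b]]))
    (hderiv : ∀ x, ∀ y ∈ [[a, b]], HasDerivAt (F · y) (F' x y) x) (x₀ : ℝ) :
    HasDerivAt (fun x => ∫ y in a..b, F x y) (∫ y in a..b, F' x₀ y) x₀ := by
  obtain ⟨M, hM⟩ := ((isCompact_closedBall x₀ 1).prod isCompact_uIcc).exists_bound_of_continuousOn
    (hF'.mono (prod_mono (subset_univ _) le_rfl))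
  have hF'x₀ : ContinuousOn (F' x₀) [[a, b]] :=
    hF'.comp (Continuous.continuousOn (Continuous.prodMk_right x₀)) fun _ hy => ⟨mem_univ _, hy⟩
  refine (hasDerivAt_integral_of_dominated_loc_of_deriv_le (bound := fun _ => M)
    (ball_mem_nhds x₀ one_pos)
    (Filter.Eventually.of_forall fun x =>
      ((hF x).mono uIoc_subset_uIcc).aestronglyMeasurable measurableSet_uIoc)
    (hF x₀).intervalIntegrable
    ((hF'x₀.mono uIoc_subset_uIcc).aestronglyMeasurable measurableSet_uIoc)
    (Filter.Eventually.of_forall fun y hy x hx =>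
      hM (x, y) ⟨ball_subset_closedBall hx, uIoc_subset_uIcc hy⟩)
    intervalIntegrable_const
    (Filter.Eventually.of_forall fun y hy x _ => hderiv x y (uIoc_subset_uIcc hy))).2

theorem contDiffOn_succ_of_derivWithin_eq {f g : ℝ → ℝ} {s : Set ℝ} {c : ℝ}
    (hs : UniqueDiffOn ℝ s) (hf : DifferentiableOn ℝ f s)
    (hfg : ∀ x ∈ s, derivWithin f s x = c * f x + g x) :
    ∀ n : ℕ, ContDiffOn ℝ n g s → ContDiffOn ℝ (n + 1) f s := by
  intro n
  induction n with
  | zero =>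
    intro hg
    refine (contDiffOn_succ_iff_derivWithin hs).2 ⟨hf, by simp, ?_⟩
    exact (contDiffOn_const.mul (contDiffOn_zero.2 hf.continuousOn)).add hg |>.congr hfg
  | succ n ih =>
    intro hg
    refine (contDiffOn_succ_iff_derivWithin hs).2 ⟨hf, by simp, ?_⟩
    exact (contDiffOn_const.mul (ih (hg.of_succ))).add hg |>.congr hfg

theorem integral_primitive_mul_eq_integral_mul_integral {k q : ℝ → ℝ} {a b : ℝ} (hab : a ≤ b)
    (hk : IntervalIntegrable k volume a b) (hq : IntervalIntegrable q volume a b) :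
    ∫ y in a..b, (∫ v in a..y, k v) * q y = ∫ v in a..b, k v * ∫ y in v..b, q y := by
  set μ := volume.restrict (Ioc a b)
  set f : ℝ × ℝ → ℝ := {p | p.1 ≤ p.2}.indicator fun p => k p.1 * q p.2
  have hf : Integrable f (μ.prod μ) :=
    (((intervalIntegrable_iff_integrableOn_Ioc_of_le hab).1 hk).mul_prod
      ((intervalIntegrable_iff_integrableOn_Ioc_of_le hab).1 hq)).indicator
      (measurableSet_le measurable_fst measurable_snd)
  have inner_v : ∀ y ∈ Ioc a b, ∫ v, f (v, y) ∂μ = (∫ v in a..y, k v) * q y := fun y hy => by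
    have : (fun v => f (v, y)) = (Iic y).indicator fun v => k v * q y := by
      ext v; simp [f, indicator_apply]
    rw [this, setIntegral_indicator measurableSet_Iic, Ioc_inter_Iic, min_eq_right hy.2,
      integral_of_le hy.1.le, MeasureTheory.integral_mul_const]
  have inner_y : ∀ v ∈ Ioc a b, ∫ y, f (v, y) ∂μ = k v * ∫ y in v..b, q y := fun v hv => by
    have : (fun y => f (v, y)) = (Ici v).indicator fun y => k v * q y := by
      ext y; simp [f, indicator_apply]
    have hIcc : Ioc a b ∩ Ici v = Icc v b := by
      ext y
      simp only [mem_inter_iff, mem_Ioc, mem_Ici, mem_Icc]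
      exact ⟨fun h => ⟨h.2, h.1.2⟩, fun h => ⟨⟨hv.1.trans_le h.1, h.2⟩, h.1⟩⟩
    rw [this, setIntegral_indicator measurableSet_Ici, hIcc, integral_Icc_eq_integral_Ioc,
      integral_of_le hv.2, MeasureTheory.integral_const_mul]
  calc ∫ y in a..b, (∫ v in a..y, k v) * q y = ∫ y, ∫ v, f (v, y) ∂μ ∂μ := by
        rw [integral_of_le hab]
        exact setIntegral_congr_fun measurableSet_Ioc fun y hy => (inner_v y hy).symm
    _ = ∫ v, ∫ y, f (v, y) ∂μ ∂μ := (integral_integral_swap (f := fun v y => f (v, y)) hf).symm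
    _ = ∫ v in a..b, k v * ∫ y in v..b, q y := by
        rw [integral_of_le hab]
        exact setIntegral_congr_fun measurableSet_Ioc inner_y

theorem hasDerivWithinAt_exp_neg_mul_integral {φ : ℝ → ℝ} {a b x : ℝ} (β : ℝ)
    (hφ : ContinuousOn φ (Icc a b)) (hx : x ∈ Icc a b) :
    HasDerivWithinAt (fun t => exp (-(β * t)) * ∫ r in t..b, exp (β * r) * φ r)
      (-β * (exp (-(β * x)) * ∫ r in x..b, exp (β * r) * φ r) - φ x) (Icc a b) x := by
  have : Fact (x ∈ Icc a b) := ⟨hx⟩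
  have hg : ContinuousOn (fun r => exp (β * r) * φ r) (Icc a b) := by fun_prop
  have htail : HasDerivWithinAt (fun t => ∫ r in t..b, exp (β * r) * φ r)
      (-(exp (β * x) * φ x)) (Icc a b) x :=
    integral_hasDerivWithinAt_left
      ((hg.mono (uIcc_subset_Icc hx (right_mem_Icc.2 (hx.1.trans hx.2)))).intervalIntegrable)
      (hg.stronglyMeasurableAtFilter_nhdsWithin measurableSet_Icc x) (hg x hx)
  have hexp : HasDerivAt (fun t => exp (-(β * t))) (exp (-(β * x)) * -β) x :=
    ((hasDerivAt_id x).const_mul β).neg.exp.congr_deriv (by simp)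
  refine (hexp.hasDerivWithinAt.mul htail).congr_deriv ?_
  have : exp (-(β * x)) * exp (β * x) = 1 := by rw [← exp_add]; simp
  linear_combination (-φ x) * this

noncomputable def fOUkernelInner (α β u y : ℝ) : ℝ :=
  ∫ v in (0:ℝ)..y, exp (β * (y - v)) * |u - v| ^ (-α)

section fOU

variable {α β : ℝ}

theorem fOUkernelHigh_eq (x y : ℝ) :
    fOUkernelHigh α β x y = (1 - α / 2) * (1 - α) *
      ∫ u in (0:ℝ)..x, exp (β * (x - u)) * fOUkernelInner α β u y := by
  simp only [fOUkernelHigh, fOUkernelInner, ← intervalIntegral.integral_const_mul, mul_assoc]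

theorem fOUkernelHigh_zero_left (y : ℝ) : fOUkernelHigh α β 0 y = 0 := by
  simp [fOUkernelHigh]

/-- The substitution `w = u − v` writes `h(u,y)` as `e^{β(y−u)}` times an increment of a primitive
of the locally integrable `w ↦ e^{βw} |w|^{−α}`, which is continuous despite the singularity. -/
theorem continuous_fOUkernelInner (hα : α < 1) :
    Continuous (Function.uncurry (fOUkernelInner α β)) := by
  have hk : ∀ a b, IntervalIntegrable (fun w => exp (β * w) * |w| ^ (-α)) volume a b :=
    fun a b => (intervalIntegrable_abs_rpow (by linarith) a b).continuousOn_mul (by fun_prop)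
  have key : Function.uncurry (fOUkernelInner α β) = fun p : ℝ × ℝ =>
      exp (β * (p.2 - p.1)) * ∫ v in (0:ℝ)..p.2, exp (β * (p.1 - v)) * |p.1 - v| ^ (-α) := by
    ext ⟨u, y⟩
    rw [Function.uncurry_apply_pair, fOUkernelInner, ← intervalIntegral.integral_const_mul]
    congr 1 with v
    rw [← mul_assoc, ← exp_add]
    ring_nf
  have := continuous_integral_comp_sub_left hk 0
  rw [key]
  fun_prop

theorem continuous_fOUkernelHigh (hα : α < 1) :
    Continuous (Function.uncurry (fOUkernelHigh α β)) := by
  have h := continuous_fOUkernelInner (β := β) hα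
  have key : Function.uncurry (fOUkernelHigh α β) = fun p : ℝ × ℝ => (1 - α / 2) * (1 - α) *
      ∫ u in (0:ℝ)..p.1, exp (β * (p.1 - u)) * fOUkernelInner α β u p.2 :=
    funext fun p => fOUkernelHigh_eq p.1 p.2
  rw [key]
  fun_prop

theorem hasDerivAt_fOUkernelHigh (hα : α < 1) (x y : ℝ) :
    HasDerivAt (fOUkernelHigh α β · y)
      (β * fOUkernelHigh α β x y + (1 - α / 2) * (1 - α) * fOUkernelInner α β x y) x := by
  have hf : Continuous (fOUkernelInner α β · y) :=
    (continuous_fOUkernelInner hα).comp (Continuous.prodMk_left y)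
  simp_rw [fOUkernelHigh_eq]
  exact ((hasDerivAt_integral_exp_mul_sub hf β 0 x).const_mul _).congr_deriv (by ring)

theorem hasDerivAt_integral_fOUkernelHigh_mul (hα : α < 1) {φ : ℝ → ℝ} {a b : ℝ}
    (hφ : ContinuousOn φ [[a, b]]) (x : ℝ) :
    HasDerivAt (fun x => ∫ y in a..b, fOUkernelHigh α β x y * φ y)
      (β * (∫ y in a..b, fOUkernelHigh α β x y * φ y) +
        (1 - α / 2) * (1 - α) * ∫ y in a..b, fOUkernelInner α β x y * φ y) x := by
  have hK := continuous_fOUkernelHigh (β := β) hα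
  have hh := continuous_fOUkernelInner (β := β) hα
  have hKφ : ∀ x, ContinuousOn (fun y => fOUkernelHigh α β x y * φ y) [[a, b]] := fun x =>
    (hK.comp (Continuous.prodMk_right x)).continuousOn.mul hφ
  have hhφ : ContinuousOn (fun y => fOUkernelInner α β x y * φ y) [[a, b]] :=
    (hh.comp (Continuous.prodMk_right x)).continuousOn.mul hφ
  have hF' : ContinuousOn (fun p : ℝ × ℝ => (β * fOUkernelHigh α β p.1 p.2 +
      (1 - α / 2) * (1 - α) * fOUkernelInner α β p.1 p.2) * φ p.2) (univ ×ˢ [[a, b]]) :=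
    ((Continuous.continuousOn (by fun_prop))).mul (hφ.comp continuousOn_snd fun _ hp => hp.2)
  refine (hasDerivAt_intervalIntegral_of_continuousOn (F' := fun x y => (β * fOUkernelHigh α β x y +
      (1 - α / 2) * (1 - α) * fOUkernelInner α β x y) * φ y) hKφ hF'
    (fun x y _ => (hasDerivAt_fOUkernelHigh hα x y).mul_const (φ y)) x).congr_deriv ?_
  rw [← intervalIntegral.integral_const_mul, ← intervalIntegral.integral_const_mul,
    ← intervalIntegral.integral_add ((hKφ x).intervalIntegrable.const_mul β)
      (hhφ.intervalIntegrable.const_mul _)]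
  congr 1 with y
  ring

theorem integral_fOUkernelInner_mul (hα : α < 1) {φ : ℝ → ℝ} (hφ : ContinuousOn φ (Icc 0 1))
    (x : ℝ) :
    ∫ y in (0:ℝ)..1, fOUkernelInner α β x y * φ y =
      ∫ v in (0:ℝ)..1, |x - v| ^ (-α) * (exp (-(β * v)) * ∫ r in v..1, exp (β * r) * φ r) := by
  have hk : IntervalIntegrable (fun v => exp (-(β * v)) * |x - v| ^ (-α)) volume 0 1 := by
    have := (intervalIntegrable_abs_rpow (r := -α) (by linarith) (x - 0) (x - 1)).comp_sub_left x
    simp only [sub_sub_cancel] at this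
    exact this.continuousOn_mul (by fun_prop)
  have hq : IntervalIntegrable (fun y => exp (β * y) * φ y) volume 0 1 :=
    (ContinuousOn.mul (by fun_prop) hφ).intervalIntegrable_of_Icc zero_le_one
  have inner : ∀ y, fOUkernelInner α β x y * φ y =
      (∫ v in (0:ℝ)..y, exp (-(β * v)) * |x - v| ^ (-α)) * (exp (β * y) * φ y) := fun y => by
    have : ∫ v in (0:ℝ)..y, exp (β * (y - v)) * |x - v| ^ (-α) =
        exp (β * y) * ∫ v in (0:ℝ)..y, exp (-(β * v)) * |x - v| ^ (-α) := by
      rw [← intervalIntegral.integral_const_mul]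
      congr 1 with v
      rw [← mul_assoc, ← exp_add]
      ring_nf
    rw [fOUkernelInner, this]
    ring
  simp_rw [inner]
  rw [integral_primitive_mul_eq_integral_mul_integral zero_le_one hk hq]
  congr 1 with v
  ring


theorem fOU_eigenfunction_derivWithin (hα : α < 1) {lam : ℝ} {φ : ℝ → ℝ}
    (hφ : ContDiffOn ℝ 1 φ (Icc 0 1))
    (heig : ∀ x ∈ Icc (0:ℝ) 1, ∫ y in (0:ℝ)..1, fOUkernelHigh α β x y * φ y = lam * φ x)
    {x : ℝ} (hx : x ∈ Icc (0:ℝ) 1) :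
    lam * derivWithin φ (Icc 0 1) x = β * (lam * φ x) + (1 - α / 2) * (1 - α) *
      ∫ v in (0:ℝ)..1, |x - v| ^ (-α) * (exp (-(β * v)) * ∫ r in v..1, exp (β * r) * φ r) := by
  have hφc : ContinuousOn φ [[0, 1]] := by
    simpa [uIcc_of_le zero_le_one] using hφ.continuousOn
  have hlamφ := (hasDerivAt_integral_fOUkernelHigh_mul (β := β) hα hφc x).hasDerivWithinAt.congr
    (fun z hz => (heig z hz).symm) (heig x hx).symm
  rw [heig x hx, integral_fOUkernelInner_mul hα hφ.continuousOn] at hlamφ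
  exact (uniqueDiffOn_Icc one_pos x hx).eq_deriv _
    ((hφ.differentiableOn one_ne_zero x hx).hasDerivWithinAt.const_mul lam) hlamφ

end fOU

/-- Reduction of the fOU eigenproblem to the generalized spectral problem for `ψ`. -/
theorem fOU_reduction_to_generalized_spectral_problem
    (α β lam : ℝ) (hα : α ∈ Set.Ioo (0:ℝ) 1) (hlam : 0 < lam)
    (φ : ℝ → ℝ) (hφ : ContDiffOn ℝ 1 φ (Icc 0 1))
    (heig : ∀ x ∈ Icc (0:ℝ) 1,
      (∫ y in (0:ℝ)..1, fOUkernelHigh α β x y * φ y) = lam * φ x)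
    (ψ : ℝ → ℝ)
    (hψ : ∀ x : ℝ, ψ x = Real.exp (-(β * x)) * ∫ r in x..(1:ℝ), Real.exp (β * r) * φ r) :
    ContDiffOn ℝ 2 ψ (Icc 0 1) ∧
    (∀ x ∈ Icc (0:ℝ) 1, derivWithin ψ (Icc 0 1) x + β * ψ x = -φ x) ∧
    (∀ x ∈ Icc (0:ℝ) 1,
      (∫ y in (0:ℝ)..1, (1 - α / 2) * (1 - α) * |x - y| ^ (-α) * ψ y)
        = lam * (β ^ 2 * ψ x - derivWithin (derivWithin ψ (Icc 0 1)) (Icc 0 1) x)) ∧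
    ψ 1 = 0 ∧
    derivWithin ψ (Icc 0 1) 0 + β * ψ 0 = 0 := by
  obtain ⟨-, hα⟩ := hα
  obtain rfl : ψ = fun x => exp (-(β * x)) * ∫ r in x..1, exp (β * r) * φ r := funext hψ
  set ψ := fun x => exp (-(β * x)) * ∫ r in x..1, exp (β * r) * φ r
  have hs : UniqueDiffOn ℝ (Icc (0:ℝ) 1) := uniqueDiffOn_Icc one_pos
  have hφd : ∀ x ∈ Icc (0:ℝ) 1, HasDerivWithinAt φ (derivWithin φ (Icc 0 1) x) (Icc 0 1) x :=
    fun x hx => ((hφ.differentiableOn one_ne_zero) x hx).hasDerivWithinAt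
  have hψd : ∀ x ∈ Icc (0:ℝ) 1, HasDerivWithinAt ψ (-β * ψ x - φ x) (Icc 0 1) x :=
    fun x hx => hasDerivWithinAt_exp_neg_mul_integral β hφ.continuousOn hx
  have hψ' : ∀ x ∈ Icc (0:ℝ) 1, derivWithin ψ (Icc 0 1) x = -β * ψ x - φ x :=
    fun x hx => (hψd x hx).derivWithin (hs x hx)
  have hψ'' : ∀ x ∈ Icc (0:ℝ) 1, derivWithin (derivWithin ψ (Icc 0 1)) (Icc 0 1) x =
      -β * (-β * ψ x - φ x) - derivWithin φ (Icc 0 1) x := fun x hx =>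
    (((hψd x hx).const_mul (-β)).sub (hφd x hx)).congr hψ' (hψ' x hx) |>.derivWithin (hs x hx)
  have hφ0 : φ 0 = 0 := by
    simpa [fOUkernelHigh_zero_left, hlam.ne'] using (heig 0 (left_mem_Icc.2 zero_le_one)).symm
  refine ⟨?_, fun x hx => by rw [hψ' x hx]; ring, fun x hx => ?_, by simp [ψ],
    by rw [hψ' 0 (left_mem_Icc.2 zero_le_one), hφ0]; ring⟩
  · exact contDiffOn_succ_of_derivWithin_eq (c := -β) (g := fun x => -φ x) hs
      (fun x hx => (hψd x hx).differentiableWithinAt) (fun x hx => by rw [hψ' x hx]; ring) 1 hφ.neg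
  · have hφ' := fOU_eigenfunction_derivWithin hα hφ heig hx
    simp_rw [mul_assoc, intervalIntegral.integral_const_mul]
    rw [hψ'' x hx]
    linear_combination -hφ'
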